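/- Assume the finite-dimensional Hypothesis H (∫₀^∞ tr(e^{sA}Qe^{sAᵀ})ds < ∞ and Q∞ invertible) and assume AQ = QAᵀ. Then Q is invertible and every eigenvalue of A has negative real part; in particular ker(A) = {0}. -/

import Mathlib

/-!
Since `A Q = Q Aᵀ`, the exponentials are intertwined, `e^{sA} Q = Q e^{sAᵀ}`, so
`e^{sA} Q e^{sAᵀ} = e^{2sA} Q`. Hence `ker Q ⊆ ker Q∞`, and `Q` is invertible. Then
`e^{2sA} = Q_s Q⁻¹` has entries integrable on `(0, ∞)`, because the entries of the positive
semidefinite `Q_s` are bounded by its trace. For a complex eigenvector `A v = λ v` the coordinates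
of `e^{sA} v = e^{sλ} v` are therefore integrable on `(0, ∞)`, which forces `Re λ < 0`; the case
`λ = 0` gives `ker A = 0`.
-/

open MeasureTheory ProbabilityTheory Matrix
open scoped ENNReal Classical

noncomputable section

/-- `e^{sA} Q e^{sAᵀ}`. -/
def QsMat {d : ℕ} (A Q : Matrix (Fin d) (Fin d) ℝ) (s : ℝ) : Matrix (Fin d) (Fin d) ℝ :=
  NormedSpace.exp (s • A) * Q * NormedSpace.exp (s • Aᵀ)

/-- `Q∞ = ∫₀^∞ e^{sA} Q e^{sAᵀ} ds` (entrywise integral). -/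
def QinfMat {d : ℕ} (A Q : Matrix (Fin d) (Fin d) ℝ) : Matrix (Fin d) (Fin d) ℝ :=
  Matrix.of fun i j => ∫ s in Set.Ioi (0:ℝ), QsMat A Q s i j

namespace Matrix.PosSemidef

variable {n : Type*} [Fintype n] {S : Matrix n n ℝ}

lemma two_mul_abs_apply_le_add (hS : S.PosSemidef) (i j : n) :
    2 * |S i j| ≤ S i i + S j j := by
  have hsymm : S j i = S i j := by simpa using hS.isHermitian.apply i j
  have hplus := hS.dotProduct_mulVec_nonneg (Pi.single i 1 + Pi.single j 1)
  have hminus := hS.dotProduct_mulVec_nonneg (Pi.single i 1 - Pi.single j 1)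
  simp only [star_trivial, mulVec_add, mulVec_sub, mulVec_single, dotProduct_add, add_dotProduct,
    dotProduct_sub, sub_dotProduct, single_dotProduct, one_mul, MulOpposite.op_one,
    one_smul, col_apply, hsymm] at hplus hminus
  cases abs_cases (S i j) <;> linarith

lemma apply_le_trace (hS : S.PosSemidef) (i : n) : S i i ≤ S.trace :=
  Finset.single_le_sum (f := fun k => S k k) (fun _ _ => hS.diag_nonneg) (Finset.mem_univ i)

lemma abs_apply_le_trace (hS : S.PosSemidef) (i j : n) : |S i j| ≤ S.trace := by
  linarith [hS.two_mul_abs_apply_le_add i j, hS.apply_le_trace i, hS.apply_le_trace j]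

end Matrix.PosSemidef

section IntegralOfMatrices

variable {α n : Type*} [Fintype n] [MeasurableSpace α] {μ : Measure α}
  {F : α → Matrix n n ℝ}

lemma integrable_apply_of_integrable_trace (hF : ∀ x, (F x).PosSemidef)
    (hmeas : ∀ i j, AEStronglyMeasurable (fun x => F x i j) μ)
    (htr : Integrable (fun x => (F x).trace) μ) (i j : n) :
    Integrable (fun x => F x i j) μ :=
  htr.mono (hmeas i j) <| ae_of_all _ fun x => by
    rw [Real.norm_eq_abs, Real.norm_eq_abs, abs_of_nonneg (hF x).trace_nonneg]
    exact (hF x).abs_apply_le_trace i j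

lemma of_integral_mulVec (hF : ∀ i j, Integrable (fun x => F x i j) μ) (v : n → ℝ) :
    (of fun i j => ∫ x, F x i j ∂μ) *ᵥ v = fun i => ∫ x, (F x *ᵥ v) i ∂μ := by
  funext i
  simp only [mulVec, dotProduct, of_apply, ← integral_mul_const]
  exact (integral_finsetSum _ fun j _ => (hF i j).mul_const (v j)).symm

end IntegralOfMatrices

section Exponential

attribute [local instance] Matrix.linftyOpNormedRing Matrix.linftyOpNormedAlgebra

variable {n : Type*} [Fintype n] [DecidableEq n]

lemma exp_mulVec_of_mulVec_eq_smul {M : Matrix n n ℂ} {v : n → ℂ} {μ : ℂ}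
    (h : M *ᵥ v = μ • v) : NormedSpace.exp M *ᵥ v = Complex.exp μ • v := by
  -- Every column of `V` is `v`, so `V * μ = M * V`; exponentiate this semiconjugacy.
  set V : Matrix n n ℂ := of fun i _ => v i
  have hV : SemiconjBy V (algebraMap ℂ (Matrix n n ℂ) μ) M := by
    ext i j
    simpa [V, mul_apply, mulVec, dotProduct, mul_comm, algebraMap_eq_diagonal, diagonal_apply]
      using (congr_fun h i).symm
  have hexpV := hV.exp_right
  rw [← NormedSpace.algebraMap_exp_comm, ← Complex.exp_eq_exp_ℂ] at hexpV
  funext i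
  have hcol := congr_fun₂ hexpV i i
  simp only [V, mul_apply, of_apply, algebraMap_eq_diagonal, diagonal_apply] at hcol
  simp [mulVec, dotProduct, mul_comm] at hcol ⊢
  exact hcol.symm

lemma exp_map_algebraMap (B : Matrix n n ℝ) :
    (NormedSpace.exp B).map (algebraMap ℝ ℂ) = NormedSpace.exp (B.map (algebraMap ℝ ℂ)) :=
  NormedSpace.map_exp (algebraMap ℝ ℂ).mapMatrix
    (continuous_id.matrix_map (continuous_algebraMap ℝ ℂ)) B

end Exponential

lemma Complex.re_lt_zero_of_integrableOn_exp_mul {μ c : ℂ} (hc : c ≠ 0)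
    (h : IntegrableOn (fun s : ℝ => Complex.exp (s * μ) * c) (Set.Ioi 0)) : μ.re < 0 := by
  by_contra! hre
  have hconst : IntegrableOn (fun _ : ℝ => ‖c‖) (Set.Ioi 0) := by
    refine h.norm.mono' aestronglyMeasurable_const ((ae_restrict_iff' measurableSet_Ioi).mpr
      (ae_of_all _ fun s (hs : 0 < s) => ?_))
    rw [Real.norm_of_nonneg (norm_nonneg c), norm_mul, Complex.norm_exp]
    refine le_mul_of_one_le_left (norm_nonneg c) (Real.one_le_exp ?_)
    simpa using mul_nonneg hs.le hre
  simp [integrableOn_const_iff, hc] at hconst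

section Spectrum

variable {n : Type*} [Fintype n] [DecidableEq n]

lemma re_lt_zero_of_mulVec_eq_smul {B : Matrix n n ℝ}
    (hB : ∀ i j, IntegrableOn (fun s : ℝ => NormedSpace.exp (s • B) i j) (Set.Ioi 0))
    {v : n → ℂ} (hv : v ≠ 0) {μ : ℂ} (h : B.map (algebraMap ℝ ℂ) *ᵥ v = μ • v) :
    μ.re < 0 := by
  obtain ⟨i, hi⟩ := Function.ne_iff.mp hv
  refine Complex.re_lt_zero_of_integrableOn_exp_mul hi ?_
  have hexp (s : ℝ) : ((NormedSpace.exp (s • B)).map (algebraMap ℝ ℂ) *ᵥ v) i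
      = Complex.exp (s * μ) * v i := by
    have hsv : (s • B.map (algebraMap ℝ ℂ)) *ᵥ v = ((s : ℂ) * μ) • v := by
      rw [smul_mulVec, h, ← smul_assoc, Complex.real_smul]
    rw [exp_map_algebraMap, Matrix.map_smul _ _ fun a => by simp,
      exp_mulVec_of_mulVec_eq_smul hsv]
    rfl
  simp_rw [← hexp]
  simp only [mulVec, dotProduct, map_apply]
  exact integrable_finsetSum _ fun k _ => (hB i k).ofReal.mul_const (v k)

lemma exists_mulVec_eq_smul_of_isRoot_charpoly {K : Type*} [Field K] {M : Matrix n n K} {μ : K}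
    (h : M.charpoly.IsRoot μ) : ∃ v : n → K, v ≠ 0 ∧ M *ᵥ v = μ • v := by
  rw [Polynomial.IsRoot, eval_charpoly] at h
  obtain ⟨v, hv, hMv⟩ := exists_mulVec_eq_zero_iff.mpr h
  refine ⟨v, hv, ?_⟩
  rw [sub_mulVec, sub_eq_zero] at hMv
  rw [← hMv]
  ext i
  simp [mulVec_diagonal]

end Spectrum

section QsMat

attribute [local instance] Matrix.linftyOpNormedRing Matrix.linftyOpNormedAlgebra

variable {d : ℕ} {A Q : Matrix (Fin d) (Fin d) ℝ}

lemma continuous_QsMat (A Q : Matrix (Fin d) (Fin d) ℝ) : Continuous (QsMat A Q) := by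
  unfold QsMat
  fun_prop

lemma posSemidef_QsMat (hQ : Q.PosSemidef) (s : ℝ) : (QsMat A Q s).PosSemidef := by
  have h := hQ.mul_mul_conjTranspose_same (NormedSpace.exp (s • A))
  rwa [conjTranspose_eq_transpose_of_trivial, ← Matrix.exp_transpose, transpose_smul] at h

lemma QsMat_eq_exp_mul (hcomm : A * Q = Q * Aᵀ) (s : ℝ) :
    QsMat A Q s = NormedSpace.exp ((2 * s) • A) * Q := by
  have hsemiconj : SemiconjBy Q (s • Aᵀ) (s • A) := by
    rw [SemiconjBy, mul_smul_comm, smul_mul_assoc, hcomm]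
  have hexp : Q * NormedSpace.exp (s • Aᵀ) = NormedSpace.exp (s • A) * Q :=
    hsemiconj.exp_right
  rw [QsMat, mul_assoc, hexp, ← mul_assoc,
    ← Matrix.exp_add_of_commute _ _ (Commute.refl _), ← add_smul, ← two_mul]

lemma integrableOn_QsMat_apply (hQ : Q.PosSemidef)
    (htr : IntegrableOn (fun s : ℝ => (QsMat A Q s).trace) (Set.Ioi 0)) (i j : Fin d) :
    IntegrableOn (fun s => QsMat A Q s i j) (Set.Ioi 0) :=
  integrable_apply_of_integrable_trace (fun s => posSemidef_QsMat hQ s)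
    (fun i j => ((continuous_apply_apply i j).comp (continuous_QsMat A Q)).aestronglyMeasurable)
    htr i j

lemma QinfMat_mulVec_eq_zero (hQ : Q.PosSemidef)
    (htr : IntegrableOn (fun s : ℝ => (QsMat A Q s).trace) (Set.Ioi 0))
    (hcomm : A * Q = Q * Aᵀ) {v : Fin d → ℝ} (hv : Q *ᵥ v = 0) :
    QinfMat A Q *ᵥ v = 0 := by
  rw [QinfMat, of_integral_mulVec (integrableOn_QsMat_apply hQ htr)]
  ext i
  simp [QsMat_eq_exp_mul hcomm, ← mulVec_mulVec, hv]

lemma isUnit_det_of_isUnit_det_QinfMat (hQ : Q.PosSemidef)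
    (htr : IntegrableOn (fun s : ℝ => (QsMat A Q s).trace) (Set.Ioi 0))
    (hinv : IsUnit (QinfMat A Q).det) (hcomm : A * Q = Q * Aᵀ) : IsUnit Q.det := by
  rw [isUnit_iff_ne_zero] at hinv ⊢
  intro hdet
  obtain ⟨v, hv, hQv⟩ := exists_mulVec_eq_zero_iff.mpr hdet
  exact hinv (exists_mulVec_eq_zero_iff.mp ⟨v, hv, QinfMat_mulVec_eq_zero hQ htr hcomm hQv⟩)

lemma integrableOn_exp_smul_apply (hQ : Q.PosSemidef)
    (htr : IntegrableOn (fun s : ℝ => (QsMat A Q s).trace) (Set.Ioi 0))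
    (hcomm : A * Q = Q * Aᵀ) (hQdet : IsUnit Q.det) (i j : Fin d) :
    IntegrableOn (fun s : ℝ => NormedSpace.exp (s • A) i j) (Set.Ioi 0) := by
  have hdouble : IntegrableOn (fun s : ℝ => NormedSpace.exp ((2 * s) • A) i j) (Set.Ioi 0) := by
    have hexp (s : ℝ) : NormedSpace.exp ((2 * s) • A) = QsMat A Q s * Q⁻¹ := by
      rw [QsMat_eq_exp_mul hcomm, mul_nonsing_inv_cancel_right _ _ hQdet]
    simp only [hexp, mul_apply]
    exact integrable_finsetSum _ fun k _ => (integrableOn_QsMat_apply hQ htr i k).mul_const _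
  simpa using (integrableOn_Ioi_comp_mul_left_iff (fun s => NormedSpace.exp (s • A) i j) 0
    two_pos).mp hdouble

end QsMat

theorem statement19 (d : ℕ) (A Q : Matrix (Fin d) (Fin d) ℝ)
    (hQ : Q.PosSemidef)
    -- Hypothesis H: ∫₀^∞ tr(e^{sA}Qe^{sAᵀ}) ds < ∞ and Q∞ is invertible
    (htr : IntegrableOn (fun s : ℝ => (QsMat A Q s).trace) (Set.Ioi 0))
    (hinv : IsUnit (QinfMat A Q).det)
    (hcomm : A * Q = Q * Aᵀ) :
    IsUnit Q.det ∧
      (∀ lam : ℂ, lam ∈ ((A.charpoly).map (algebraMap ℝ ℂ)).roots → lam.re < 0) ∧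
      (∀ v : Fin d → ℝ, A.mulVec v = 0 → v = 0) := by
  have hQdet := isUnit_det_of_isUnit_det_QinfMat hQ htr hinv hcomm
  have hexp := integrableOn_exp_smul_apply hQ htr hcomm hQdet
  refine ⟨hQdet, fun lam hlam => ?_, fun v hAv => ?_⟩
  · rw [Polynomial.mem_roots', ← charpoly_map] at hlam
    obtain ⟨v, hv, hAv⟩ := exists_mulVec_eq_smul_of_isRoot_charpoly hlam.2
    exact re_lt_zero_of_mulVec_eq_smul hexp hv hAv
  · by_contra hv
    set w : Fin d → ℂ := algebraMap ℝ ℂ ∘ v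
    have hw : w ≠ 0 := fun h => hv (funext fun i => by simpa [w] using congr_fun h i)
    have hAw : A.map (algebraMap ℝ ℂ) *ᵥ w = (0 : ℂ) • w := by
      ext i
      rw [← RingHom.map_mulVec, hAv]
      simp
    simpa using re_lt_zero_of_mulVec_eq_smul hexp hw hAw
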